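/- arXiv:1709.06592 — 2 statements merged into one kernel-verified Lean document; each statement's English description precedes it below -/
import Mathlib

section
/- Let V be a Hilbert space, Λ a normed space, a : V×V → ℝ a continuous bilinear form, b : V×Λ → ℝ continuous bilinear, F ∈ V', G ∈ Λ'. Let K = {v ∈ V : b(v,μ) = 0 for all μ ∈ Λ}. If a is coercive on K (a(v,v) ≥ α‖v‖² for v ∈ K, α>0) and b satisfies the inf-sup condition sup_{u∈V} b(u,μ)/‖u‖_V ≥ β‖μ‖_Λ for all μ ∈ Λ with β>0, then the saddle point problem a(u,v) − b(v,λ) = F(v) for all v ∈ V, b(u,μ) = G(μ) for all μ ∈ Λ, has a unique solution (u,λ) ∈ V×Λ, with ‖u‖_V + ‖λ‖_Λ ≤ C(‖F‖_{V'} + ‖G‖_{Λ'}). -/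
/-!
Let `T : Λ → V` represent `b`, i.e. `⟪T μ, u⟫ = b u μ`. The inf-sup condition says
`β ‖μ‖ ≤ ‖T μ‖`, so `T` is injective with closed range `M`, and the kernel of `b` is `Mᗮ`.
Riesz on `M ≃ Λ` gives `u₁ ∈ M` with `b u₁ = G`; Lax–Milgram on `Mᗮ` gives a correction
`u₀ ∈ Mᗮ` after which `a (u₀ + u₁) - F` vanishes on `Mᗮ`, so it is represented by an element of
`Mᗮᗮ = M`, which is `T λ`. The a priori bound comes from the same splitting `u = P + Q` with
`P ∈ M`, `Q ∈ Mᗮ`: testing with `P` bounds `P` by `G`, coercivity bounds `Q`, and then the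
first equation bounds `T λ`. Uniqueness is the bound for `F = G = 0`.
-/

open RealInnerProductSpace InnerProductSpace

lemma le_of_mul_sq_le_mul {c d x : ℝ} (hd : 0 ≤ d) (hx : 0 ≤ x) (h : c * x ^ 2 ≤ d * x) :
    c * x ≤ d := by
  rcases hx.eq_or_lt with rfl | hx
  · simpa using hd
  · exact le_of_mul_le_mul_right (by linarith) hx

section BoundedBelow

variable {E F : Type*} [NormedAddCommGroup E] [NormedSpace ℝ E]
  [NormedAddCommGroup F] [NormedSpace ℝ F] {T : E →L[ℝ] F} {β : ℝ}

lemma ContinuousLinearMap.antilipschitzWith_of_mul_norm_le (hβ : 0 < β)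
    (hT : ∀ x, β * ‖x‖ ≤ ‖T x‖) : AntilipschitzWith β⁻¹.toNNReal T :=
  T.antilipschitz_of_bound fun x => by
    rw [Real.coe_toNNReal _ (inv_nonneg.mpr hβ.le), ← div_eq_inv_mul, le_div_iff₀ hβ, mul_comm]
    exact hT x

lemma ContinuousLinearMap.isClosed_range_of_mul_norm_le [CompleteSpace E] (hβ : 0 < β)
    (hT : ∀ x, β * ‖x‖ ≤ ‖T x‖) : IsClosed (T.range : Set F) :=
  (T.antilipschitzWith_of_mul_norm_le hβ hT).isClosed_range T.uniformContinuous

end BoundedBelow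

section Hilbert

variable {V : Type*} [NormedAddCommGroup V] [InnerProductSpace ℝ V]

lemma Submodule.exists_mem_forall_apply_eq_of_coercive (K : Submodule ℝ V) [CompleteSpace K]
    (a : V →L[ℝ] V →L[ℝ] ℝ) {α : ℝ} (hα : 0 < α) (hcoer : ∀ v ∈ K, α * ‖v‖ ^ 2 ≤ a v v)
    (f : V →L[ℝ] ℝ) : ∃ u ∈ K, ∀ z ∈ K, a u z = f z := by
  have hK : IsCoercive (a.bilinearComp K.subtypeL K.subtypeL) :=
    ⟨α, hα, fun v => by simpa [mul_assoc, ← sq] using hcoer v v.2⟩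
  let u := hK.continuousLinearEquivOfBilin.symm ((toDual ℝ K).symm (f.comp K.subtypeL))
  refine ⟨u, u.2, fun z hz => ?_⟩
  have := hK.continuousLinearEquivOfBilin_apply u ⟨z, hz⟩
  simp only [u, ContinuousLinearEquiv.apply_symm_apply, toDual_symm_apply] at this
  simpa using this.symm

variable [CompleteSpace V]

lemma Submodule.exists_mem_forall_inner_eq_of_forall_mem_orthogonal (M : Submodule ℝ V)
    [M.HasOrthogonalProjection] (ℓ : V →L[ℝ] ℝ) (hℓ : ∀ v ∈ Mᗮ, ℓ v = 0) :
    ∃ m ∈ M, ∀ v, ⟪m, v⟫_ℝ = ℓ v := by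
  refine ⟨(toDual ℝ V).symm ℓ, ?_, fun v => toDual_symm_apply⟩
  rw [← M.orthogonal_orthogonal]
  intro v hv
  rw [real_inner_comm, toDual_symm_apply, hℓ v hv]

lemma ContinuousLinearMap.exists_mem_range_forall_inner_eq {E : Type*} [NormedAddCommGroup E]
    [NormedSpace ℝ E] [CompleteSpace E] {T : E →L[ℝ] V} {β : ℝ} (hβ : 0 < β)
    (hT : ∀ x, β * ‖x‖ ≤ ‖T x‖) (G : E →L[ℝ] ℝ) :
    ∃ u ∈ T.range, ∀ x, ⟪T x, u⟫_ℝ = G x := by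
  have hclosed := T.isClosed_range_of_mul_norm_le hβ hT
  have := hclosed.completeSpace_coe
  let e := T.equivRange (T.antilipschitzWith_of_mul_norm_le hβ hT).injective hclosed
  refine ⟨(toDual ℝ T.range).symm (G.comp e.symm.toContinuousLinearMap), Submodule.coe_mem _,
    fun x => ?_⟩
  rw [show T x = e x from rfl, ← Submodule.coe_inner, real_inner_comm, toDual_symm_apply]
  simp

end Hilbert

namespace SaddlePoint

variable {V Λ : Type*} [NormedAddCommGroup V] [InnerProductSpace ℝ V]
  [NormedAddCommGroup Λ] [NormedSpace ℝ Λ]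

def IsSolution (a : V →L[ℝ] V →L[ℝ] ℝ) (b : V →L[ℝ] Λ →L[ℝ] ℝ) (F : V →L[ℝ] ℝ)
    (G : Λ →L[ℝ] ℝ) (p : V × Λ) : Prop :=
  (∀ v, a p.1 v - b v p.2 = F v) ∧ ∀ μ, b p.1 μ = G μ

section Riesz

variable [CompleteSpace V] (b : V →L[ℝ] Λ →L[ℝ] ℝ)

/-- The operator `B*` of saddle point theory; the inf-sup condition says it is bounded below. -/
noncomputable def rieszFlip : Λ →L[ℝ] V :=
  (toDual ℝ V).symm.toContinuousLinearEquiv.toContinuousLinearMap.comp b.flip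

@[simp]
lemma inner_rieszFlip (μ : Λ) (u : V) : ⟪rieszFlip b μ, u⟫_ℝ = b u μ := by
  simp [rieszFlip, toDual_symm_apply]

lemma iSup_div_norm_le_norm_rieszFlip (μ : Λ) : ⨆ u : V, b u μ / ‖u‖ ≤ ‖rieszFlip b μ‖ := by
  refine ciSup_le fun u => div_le_of_le_mul₀ (norm_nonneg u) (norm_nonneg _) ?_
  rw [← inner_rieszFlip]
  exact real_inner_le_norm _ _

lemma mem_orthogonal_range_rieszFlip_iff {v : V} :
    v ∈ (rieszFlip b).rangeᗮ ↔ ∀ μ, b v μ = 0 := by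
  simp [Submodule.mem_orthogonal]

end Riesz

variable {a : V →L[ℝ] V →L[ℝ] ℝ} {b : V →L[ℝ] Λ →L[ℝ] ℝ}

lemma IsSolution.sub {F F' : V →L[ℝ] ℝ} {G G' : Λ →L[ℝ] ℝ} {p q : V × Λ}
    (hp : IsSolution a b F G p) (hq : IsSolution a b F' G' q) :
    IsSolution a b (F - F') (G - G') (p - q) := by
  refine ⟨fun v => ?_, fun μ => ?_⟩
  · simp only [Prod.fst_sub, Prod.snd_sub, map_sub, sub_apply, ← hp.1 v, ← hq.1 v]
    ring
  · simp [← hp.2 μ, ← hq.2 μ]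

variable {α β : ℝ} {F : V →L[ℝ] ℝ} {G : Λ →L[ℝ] ℝ} {p : V × Λ}

lemma IsSolution.mul_norm_sub_le (hcoer : ∀ v, (∀ μ, b v μ = 0) → α * ‖v‖ ^ 2 ≤ a v v)
    (hp : IsSolution a b F G p) {P : V} (hQ : ∀ μ, b (p.1 - P) μ = 0) :
    α * ‖p.1 - P‖ ≤ ‖F‖ + ‖a‖ * ‖P‖ := by
  set Q := p.1 - P
  have hFQ : a p.1 Q = F Q := by rw [← hp.1 Q, hQ, sub_zero]
  refine le_of_mul_sq_le_mul (by positivity) (norm_nonneg Q) ?_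
  calc α * ‖Q‖ ^ 2 ≤ a Q Q := hcoer Q hQ
    _ = F Q - a P Q := by rw [show a Q = a p.1 - a P from map_sub a _ _, sub_apply, hFQ]
    _ ≤ ‖F Q‖ + ‖a P Q‖ := (Real.le_norm_self _).trans (norm_sub_le _ _)
    _ ≤ ‖F‖ * ‖Q‖ + ‖a‖ * ‖P‖ * ‖Q‖ := add_le_add (F.le_opNorm Q) (a.le_opNorm₂ P Q)
    _ = (‖F‖ + ‖a‖ * ‖P‖) * ‖Q‖ := by ring

variable [CompleteSpace V]

lemma IsSolution.rieszFlip_snd (hp : IsSolution a b F G p) :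
    rieszFlip b p.2 = (toDual ℝ V).symm (a p.1 - F) :=
  ext_inner_right ℝ fun v => by
    rw [inner_rieszFlip, toDual_symm_apply, sub_apply, ← hp.1 v, sub_sub_cancel]

lemma IsSolution.mul_norm_snd_le (hT : ∀ μ, β * ‖μ‖ ≤ ‖rieszFlip b μ‖)
    (hp : IsSolution a b F G p) : β * ‖p.2‖ ≤ ‖a‖ * ‖p.1‖ + ‖F‖ :=
  calc β * ‖p.2‖ ≤ ‖rieszFlip b p.2‖ := hT _
    _ = ‖a p.1 - F‖ := by rw [hp.rieszFlip_snd, LinearIsometryEquiv.norm_map]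
    _ ≤ ‖a p.1‖ + ‖F‖ := norm_sub_le _ _
    _ ≤ ‖a‖ * ‖p.1‖ + ‖F‖ := by gcongr; exact a.le_opNorm _

lemma IsSolution.mul_norm_le_of_mem_range (hβ : 0 < β) (hT : ∀ μ, β * ‖μ‖ ≤ ‖rieszFlip b μ‖)
    (hp : IsSolution a b F G p) {P : V} (hP : P ∈ (rieszFlip b).range)
    (hQ : ∀ μ, b (p.1 - P) μ = 0) : β * ‖P‖ ≤ ‖G‖ := by
  obtain ⟨μ, rfl⟩ := hP
  simp only [ContinuousLinearMap.coe_coe] at hQ ⊢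
  have hG : ‖rieszFlip b μ‖ ^ 2 = G μ := by
    have h := inner_rieszFlip b μ (p.1 - rieszFlip b μ)
    rw [hQ, inner_sub_right, sub_eq_zero, inner_rieszFlip, hp.2 μ, real_inner_self_eq_norm_sq] at h
    exact h.symm
  refine le_of_mul_sq_le_mul (norm_nonneg G) (norm_nonneg _) ?_
  calc β * ‖rieszFlip b μ‖ ^ 2 = β * G μ := by rw [hG]
    _ ≤ β * (‖G‖ * ‖μ‖) := by gcongr; exact (Real.le_norm_self (G μ)).trans (G.le_opNorm μ)
    _ = ‖G‖ * (β * ‖μ‖) := by ring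
    _ ≤ ‖G‖ * ‖rieszFlip b μ‖ := by gcongr; exact hT μ

variable [CompleteSpace Λ]

theorem exists_isSolution (hα : 0 < α) (hcoer : ∀ v, (∀ μ, b v μ = 0) → α * ‖v‖ ^ 2 ≤ a v v)
    (hβ : 0 < β) (hT : ∀ μ, β * ‖μ‖ ≤ ‖rieszFlip b μ‖) (F : V →L[ℝ] ℝ) (G : Λ →L[ℝ] ℝ) :
    ∃ p, IsSolution a b F G p := by
  set T := rieszFlip b
  have := (T.isClosed_range_of_mul_norm_le hβ hT).completeSpace_coe
  obtain ⟨u₁, -, hu₁⟩ := T.exists_mem_range_forall_inner_eq hβ hT G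
  obtain ⟨u₀, hu₀K, hu₀⟩ := T.rangeᗮ.exists_mem_forall_apply_eq_of_coercive a hα
    (fun v hv => hcoer v ((mem_orthogonal_range_rieszFlip_iff b).1 hv)) (F - a u₁)
  obtain ⟨_, ⟨lam, rfl⟩, hlam⟩ := T.range.exists_mem_forall_inner_eq_of_forall_mem_orthogonal
    (a (u₀ + u₁) - F) fun z hz => by simp [hu₀ z hz]
  refine ⟨(u₀ + u₁, lam), fun v => ?_, fun μ => ?_⟩
  · have := hlam v
    simp only [ContinuousLinearMap.coe_coe, T, inner_rieszFlip] at this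
    simp [this]
  · rw [map_add, add_apply, (mem_orthogonal_range_rieszFlip_iff b).1 hu₀K,
      ← inner_rieszFlip, hu₁, zero_add]

theorem exists_pos_forall_norm_add_norm_le (hα : 0 < α)
    (hcoer : ∀ v, (∀ μ, b v μ = 0) → α * ‖v‖ ^ 2 ≤ a v v) (hβ : 0 < β)
    (hT : ∀ μ, β * ‖μ‖ ≤ ‖rieszFlip b μ‖) :
    ∃ C > 0, ∀ F G (p : V × Λ), IsSolution a b F G p → ‖p.1‖ + ‖p.2‖ ≤ C * (‖F‖ + ‖G‖) := by
  set T := rieszFlip b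
  have := (T.isClosed_range_of_mul_norm_le hβ hT).completeSpace_coe
  set Cu := 1 / β + (1 + ‖a‖ / β) / α
  refine ⟨Cu + (‖a‖ * Cu + 1) / β, by positivity, fun F G p hp => ?_⟩
  set S := ‖F‖ + ‖G‖
  obtain ⟨P, hP, Q, hQ, hPQ⟩ := T.range.exists_add_mem_mem_orthogonal p.1
  have hQb : ∀ μ, b (p.1 - P) μ = 0 :=
    (mem_orthogonal_range_rieszFlip_iff b).1 (by rwa [hPQ, add_sub_cancel_left])
  have hPS : ‖P‖ ≤ S / β := by
    rw [le_div_iff₀' hβ]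
    exact (hp.mul_norm_le_of_mem_range hβ hT hP hQb).trans (by simp [S])
  have hQS : ‖p.1 - P‖ ≤ (S + ‖a‖ * (S / β)) / α := by
    rw [le_div_iff₀' hα]
    refine (hp.mul_norm_sub_le hcoer hQb).trans ?_
    gcongr
    simp [S]
  have hu : ‖p.1‖ ≤ Cu * S := calc
    ‖p.1‖ ≤ ‖P‖ + ‖p.1 - P‖ := norm_le_norm_add_norm_sub' _ _
    _ ≤ S / β + (S + ‖a‖ * (S / β)) / α := add_le_add hPS hQS
    _ = Cu * S := by ring
  have hlam : ‖p.2‖ ≤ (‖a‖ * Cu + 1) / β * S := by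
    rw [div_mul_eq_mul_div, le_div_iff₀' hβ]
    calc β * ‖p.2‖ ≤ ‖a‖ * ‖p.1‖ + ‖F‖ := hp.mul_norm_snd_le hT
      _ ≤ ‖a‖ * (Cu * S) + S := by gcongr; simp [S]
      _ = (‖a‖ * Cu + 1) * S := by ring
  calc ‖p.1‖ + ‖p.2‖ ≤ Cu * S + (‖a‖ * Cu + 1) / β * S := add_le_add hu hlam
    _ = (Cu + (‖a‖ * Cu + 1) / β) * S := by ring

end SaddlePoint

/-- Babuška–Brezzi well-posedness of the saddle point problem. `V` is a Hilbert space,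
`Λ` a Banach space, `a : V×V → ℝ` and `b : V×Λ → ℝ` continuous bilinear forms,
`F ∈ V'`, `G ∈ Λ'`. If `a` is coercive on the kernel
`K = {v : ∀ μ, b(v,μ) = 0}` and `b` satisfies the inf-sup condition
`sup_u b(u,μ)/‖u‖ ≥ β ‖μ‖`, then the problem
`a(u,v) − b(v,λ) = F(v) ∀v`, `b(u,μ) = G(μ) ∀μ` has a unique solution `(u,λ)`, with
`‖u‖ + ‖λ‖ ≤ C (‖F‖ + ‖G‖)` for a constant `C` depending only on the data forms. -/
theorem stmt8 (V Λ : Type*)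
    [NormedAddCommGroup V] [InnerProductSpace ℝ V] [CompleteSpace V]
    [NormedAddCommGroup Λ] [NormedSpace ℝ Λ] [CompleteSpace Λ]
    (a : V →L[ℝ] V →L[ℝ] ℝ) (b : V →L[ℝ] Λ →L[ℝ] ℝ)
    (F : V →L[ℝ] ℝ) (G : Λ →L[ℝ] ℝ)
    (α : ℝ) (hα : 0 < α)
    (hcoer : ∀ v : V, (∀ μ : Λ, b v μ = 0) → α * ‖v‖^2 ≤ a v v)
    (β : ℝ) (hβ : 0 < β)
    (hinfsup : ∀ μ : Λ, β * ‖μ‖ ≤ ⨆ u : V, b u μ / ‖u‖) :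
    ∃ C : ℝ, 0 < C ∧
      (∃! p : V × Λ, (∀ v : V, a p.1 v - b v p.2 = F v) ∧ (∀ μ : Λ, b p.1 μ = G μ)) ∧
      (∀ p : V × Λ, ((∀ v : V, a p.1 v - b v p.2 = F v) ∧ (∀ μ : Λ, b p.1 μ = G μ)) →
        ‖p.1‖ + ‖p.2‖ ≤ C * (‖F‖ + ‖G‖)) := by
  have hT : ∀ μ, β * ‖μ‖ ≤ ‖SaddlePoint.rieszFlip b μ‖ := fun μ =>
    (hinfsup μ).trans (SaddlePoint.iSup_div_norm_le_norm_rieszFlip b μ)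
  obtain ⟨C, hC, hbound⟩ := SaddlePoint.exists_pos_forall_norm_add_norm_le hα hcoer hβ hT
  obtain ⟨p, hp⟩ := SaddlePoint.exists_isSolution hα hcoer hβ hT F G
  refine ⟨C, hC, ⟨p, hp, fun q hq => ?_⟩, hbound F G⟩
  have h := hbound _ _ _ (SaddlePoint.IsSolution.sub hq hp)
  rw [sub_self, sub_self, norm_zero, norm_zero, add_zero, mul_zero] at h
  obtain ⟨h₁, h₂⟩ := (add_eq_zero_iff_of_nonneg (norm_nonneg _) (norm_nonneg _)).1
    (h.antisymm (by positivity))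
  exact sub_eq_zero.1 (Prod.ext (norm_eq_zero.1 h₁) (norm_eq_zero.1 h₂))
end

section
/- Let Ω = (−1,1) ⊂ ℝ, s ∈ (0,1), and u(x) = c(s)(1−x²)₊^s with c(s) > 0. Then there exists C(s) > 0 such that for all x ∈ (1,2), the nonlocal normal derivative satisfies |𝒩_s u(x)| > C(s)/(x−1)^s, where 𝒩_s u(x) = C(1,s) ∫_{−1}^{1} (u(x)−u(y))/|x−y|^{1+2s} dy. -/
open MeasureTheory Set Real

/-!
Since `u` vanishes outside `(-1, 1)`, for `x = 1 + t` the integral is `-∫ u(y) / |x - y|^(1+2s)`.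
On the window `y ∈ (1 - t, 1 - t/2)` of length `t/2` one has `u(y) ≥ c (t/2)^s` and
`|x - y| ≤ 2t`, so the integral is at least `c (t/2)^s (t/2) / (2t)^(1+2s) = c / (2^(2+3s) t^s)`.
-/

theorem fractionalLaplacianConst_pos {s : ℝ} (hs0 : 0 < s) (hs1 : s < 1) :
    0 < 2 ^ (2*s) * s * Real.Gamma (s + 1/2) / (Real.sqrt Real.pi * Real.Gamma (1 - s)) := by
  have := Real.Gamma_pos_of_pos (show 0 < s + 1/2 by linarith)
  have := Real.Gamma_pos_of_pos (show 0 < 1 - s by linarith)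
  have := Real.sqrt_pos.mpr Real.pi_pos
  positivity

theorem mul_sub_le_setIntegral_of_le_on_Ioo {f : ℝ → ℝ} {S : Set ℝ} {a b m : ℝ}
    (hf : IntegrableOn f S) (hf0 : ∀ y ∈ S, 0 ≤ f y) (hS : MeasurableSet S)
    (hab : Ioo a b ⊆ S) (hle : a ≤ b) (hm : ∀ y ∈ Ioo a b, m ≤ f y) :
    m * (b - a) ≤ ∫ y in S, f y :=
  calc m * (b - a) = m * volume.real (Ioo a b) := by
        rw [Real.volume_real_Ioo_of_le hle]
    _ ≤ ∫ y in Ioo a b, f y :=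
        setIntegral_ge_of_const_le_real measurableSet_Ioo (by simp) hm (hf.mono_set hab)
    _ ≤ ∫ y in S, f y :=
        setIntegral_mono_set hf ((ae_restrict_iff' hS).mpr (.of_forall hf0)) hab.eventuallyLE

theorem integrableOn_div_abs_sub_rpow {g : ℝ → ℝ} {a b x p : ℝ} (hg : ContinuousOn g (Icc a b))
    (hx : x ∉ Icc a b) : IntegrableOn (fun y => g y / |x - y| ^ p) (Ioo a b) := by
  have hne : ∀ y ∈ Icc a b, x - y ≠ 0 := fun y hy h => hx (sub_eq_zero.mp h ▸ hy)
  refine (ContinuousOn.integrableOn_Icc (hg.div ?_ ?_)).mono_set Ioo_subset_Icc_self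
  · exact (continuous_const.sub continuous_id).abs.continuousOn.rpow_const
      fun y hy => Or.inl (abs_ne_zero.mpr (hne y hy))
  · exact fun y hy => (Real.rpow_pos_of_pos (abs_pos.mpr (hne y hy)) p).ne'

section Profile

variable {s c : ℝ} {u : ℝ → ℝ}

theorem profile_eq_zero_of_one_le_abs (hu : ∀ y, u y = c * max (1 - y^2) 0 ^ s) (hs : 0 < s)
    {x : ℝ} (hx : 1 ≤ |x|) : u x = 0 := by
  have : 1 - x^2 ≤ 0 := by nlinarith [one_le_sq_iff_one_le_abs x |>.mpr hx]
  rw [hu, max_eq_right this, Real.zero_rpow hs.ne', mul_zero]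

theorem profile_nonneg (hu : ∀ y, u y = c * max (1 - y^2) 0 ^ s) (hc : 0 ≤ c) (y : ℝ) :
    0 ≤ u y := by
  rw [hu]; positivity

theorem continuous_profile (hu : ∀ y, u y = c * max (1 - y^2) 0 ^ s) (hs : 0 ≤ s) :
    Continuous u := by
  rw [funext hu]
  exact continuous_const.mul (((continuous_const.sub (continuous_pow 2)).max
    continuous_const).rpow_const fun _ => Or.inr hs)

theorem mul_half_rpow_le_profile (hu : ∀ y, u y = c * max (1 - y^2) 0 ^ s) (hs : 0 ≤ s)
    (hc : 0 ≤ c) {t y : ℝ} (ht : t ≤ 1) (hy : y ∈ Ioo (1 - t) (1 - t/2)) :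
    c * (t/2) ^ s ≤ u y := by
  obtain ⟨hy1, hy2⟩ := hy
  have hy0 : 0 < y := by linarith
  have : t/2 ≤ 1 - y^2 := by nlinarith
  rw [hu]
  gcongr
  · linarith
  · exact this.trans (le_max_left _ _)

theorem half_rpow_div_two_mul_rpow_mul_half {t : ℝ} (ht : 0 < t) (s : ℝ) :
    (t/2) ^ s / (2*t) ^ (1 + 2*s) * (t/2) = 1 / (2 ^ (2 + 3*s) * t ^ s) := by
  have h2 : (2:ℝ) ^ (2 + 3*s) = 2 ^ s * 2 ^ (1 + 2*s) * 2 := by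
    rw [← Real.rpow_add two_pos, ← Real.rpow_add_one two_pos.ne']
    ring_nf
  have ht' : t ^ (1 + 2*s) = t * (t ^ s * t ^ s) := by
    rw [Real.rpow_add ht, Real.rpow_one, ← Real.rpow_add ht]
    ring_nf
  have := Real.rpow_pos_of_pos ht s
  have := Real.rpow_pos_of_pos two_pos s
  have := Real.rpow_pos_of_pos two_pos (1 + 2*s)
  rw [Real.div_rpow ht.le zero_le_two, Real.mul_rpow zero_le_two ht.le, ht', h2]
  field_simp

theorem div_le_integral_profile_div_rpow (hu : ∀ y, u y = c * max (1 - y^2) 0 ^ s)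
    (hs : 0 < s) (hc : 0 ≤ c) {x : ℝ} (hx : x ∈ Ioo 1 2) :
    c / (2 ^ (2 + 3*s) * (x - 1) ^ s) ≤
      ∫ y in Ioo (-1:ℝ) 1, u y / |x - y| ^ (1 + 2*s) := by
  obtain ⟨hx1, hx2⟩ := hx
  set t := x - 1 with ht_def
  have ht : 0 < t := by linarith
  have hint : IntegrableOn (fun y => u y / |x - y| ^ (1 + 2*s)) (Ioo (-1) 1) :=
    integrableOn_div_abs_sub_rpow (continuous_profile hu hs.le).continuousOn
      fun h => by linarith [h.2]
  have hlow : ∀ y ∈ Ioo (1 - t) (1 - t/2),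
      c * (t/2) ^ s / (2*t) ^ (1 + 2*s) ≤ u y / |x - y| ^ (1 + 2*s) := by
    intro y hy
    have hxy : 0 < x - y := by linarith [hy.2]
    rw [abs_of_pos hxy]
    gcongr
    · exact profile_nonneg hu hc y
    · exact mul_half_rpow_le_profile hu hs.le hc (by linarith) hy
    · linarith [hy.1]
  have := mul_sub_le_setIntegral_of_le_on_Ioo hint
    (fun y _ => div_nonneg (profile_nonneg hu hc y) (by positivity)) measurableSet_Ioo
    (Ioo_subset_Ioo (by linarith) (by linarith)) (by linarith) hlow
  rwa [show 1 - t/2 - (1 - t) = t/2 by ring, mul_div_assoc, mul_assoc,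
    half_rpow_div_two_mul_rpow_mul_half ht, ← div_eq_mul_one_div] at this

end Profile

/-- Let `Ω = (−1,1) ⊂ ℝ`, `s ∈ (0,1)`, and `u(x) = c(s)(1−x²)₊^s` with `c(s) > 0`.
Then there exists `C(s) > 0` such that for all `x ∈ (1,2)`, the nonlocal normal
derivative satisfies `|𝒩_s u(x)| > C(s)/(x−1)^s`, where
`𝒩_s u(x) = C(1,s) ∫_{−1}^{1} (u(x)−u(y))/|x−y|^{1+2s} dy` and
`C(1,s) = 2^{2s} s Γ(s+1/2)/(√π Γ(1−s))`. -/
theorem stmt9 (s : ℝ) (hs : s ∈ Set.Ioo (0:ℝ) 1) (c : ℝ) (hc : 0 < c)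
    (u : ℝ → ℝ) (hu : ∀ x, u x = c * (max (1 - x^2) 0) ^ s)
    (C1s : ℝ) (hC1s : C1s = 2 ^ (2*s) * s * Real.Gamma (s + 1/2) /
      (Real.sqrt Real.pi * Real.Gamma (1 - s))) :
    ∃ C : ℝ, 0 < C ∧ ∀ x ∈ Set.Ioo (1:ℝ) 2,
      C / (x - 1) ^ s < |C1s * ∫ y in Set.Ioo (-1:ℝ) 1, (u x - u y) / |x - y| ^ (1 + 2*s)| := by
  obtain ⟨hs0, hs1⟩ := hs
  have hC1 : 0 < C1s := hC1s ▸ fractionalLaplacianConst_pos hs0 hs1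
  refine ⟨C1s * c / (2 * 2 ^ (2 + 3*s)), by positivity, fun x hx => ?_⟩
  have hux : u x = 0 := profile_eq_zero_of_one_le_abs hu hs0 (hx.1.le.trans (le_abs_self x))
  have hbound := div_le_integral_profile_div_rpow hu hs0 hc.le hx
  set J := ∫ y in Ioo (-1:ℝ) 1, u y / |x - y| ^ (1 + 2*s)
  have hK : 0 < c / (2 ^ (2 + 3*s) * (x - 1) ^ s) := by
    have : 0 < x - 1 := by linarith [hx.1]
    positivity
  simp only [hux, zero_sub, neg_div, integral_neg]
  calc C1s * c / (2 * 2 ^ (2 + 3*s)) / (x - 1) ^ s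
      = C1s * (c / (2 ^ (2 + 3*s) * (x - 1) ^ s)) / 2 := by ring
    _ < C1s * (c / (2 ^ (2 + 3*s) * (x - 1) ^ s)) := half_lt_self (by positivity)
    _ ≤ C1s * J := by gcongr
    _ = |C1s * -J| := by rw [mul_neg, abs_neg, abs_of_pos (by nlinarith)]
end
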